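/- arXiv:1705.09644 — 2 statements merged into one kernel-verified Lean document; each statement's English description precedes it below -/
import Mathlib

section
/- Consider the chain X1 → X2 → X3 as above. If only the variance of N1 changes between the two environments (σ1² ≠ σ̃1², b ≠ 0), then the regression coefficient of X2 on X1 is invariant while the regression coefficient of X1 on X2 changes. -/
/-!
With `X₁ = N₁` uncorrelated with `N₂`, expanding `X₂ = b X₁ + N₂` gives
`E[X₁X₂] = b E[X₁²]` and `E[X₂²] = b² E[X₁²] + E[N₂²]`. So `β_{X₁}(X₂) = b` in both
environments, whereas `β_{X₂}(X₁) = b v / (b² v + σ₂²)` with `v = Var N₁`, which is injective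
in `v` as soon as `b σ₂² ≠ 0`.
-/

open MeasureTheory ProbabilityTheory

namespace ProbabilityTheory

variable {Ω : Type*} [MeasurableSpace Ω] {μ : Measure Ω}

/-- `β_X(Y)`; it equals `Cov(X,Y) / Var X` when `X` and `Y` are centred. -/
noncomputable def regCoeff (μ : Measure Ω) (X Y : Ω → ℝ) : ℝ :=
  (∫ ω, X ω * Y ω ∂μ) / ∫ ω, X ω ^ 2 ∂μ

lemma IndepFun.integral_mul_eq_zero {X Y : Ω → ℝ} (hXY : IndepFun X Y μ)
    (hX : AEStronglyMeasurable X μ) (hY : AEStronglyMeasurable Y μ) (hX₀ : ∫ ω, X ω ∂μ = 0) :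
    ∫ ω, X ω * Y ω ∂μ = 0 := by
  rw [hXY.integral_fun_mul_eq_mul_integral hX hY, hX₀, zero_mul]

section LinearMechanism

variable {X N : Ω → ℝ}

lemma integral_mul_linear_add (hX : MemLp X 2 μ) (hN : MemLp N 2 μ)
    (hXN : ∫ ω, X ω * N ω ∂μ = 0) (b : ℝ) :
    ∫ ω, X ω * (b * X ω + N ω) ∂μ = b * ∫ ω, X ω ^ 2 ∂μ := by
  have hXN_int : Integrable (fun ω => X ω * N ω) μ := hX.integrable_mul hN
  calc ∫ ω, X ω * (b * X ω + N ω) ∂μ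
      = ∫ ω, b * X ω ^ 2 + X ω * N ω ∂μ := by congr 1; funext ω; ring
    _ = b * ∫ ω, X ω ^ 2 ∂μ := by
      rw [integral_add (hX.integrable_sq.const_mul b) hXN_int,
        integral_const_mul, hXN, add_zero]

lemma integral_linear_add_sq (hX : MemLp X 2 μ) (hN : MemLp N 2 μ)
    (hXN : ∫ ω, X ω * N ω ∂μ = 0) (b : ℝ) :
    ∫ ω, (b * X ω + N ω) ^ 2 ∂μ = b ^ 2 * ∫ ω, X ω ^ 2 ∂μ + ∫ ω, N ω ^ 2 ∂μ := by
  have hsq_int : Integrable (fun ω => b ^ 2 * X ω ^ 2 + N ω ^ 2) μ :=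
    (hX.integrable_sq.const_mul _).add hN.integrable_sq
  have hcross_int : Integrable (fun ω => 2 * b * (X ω * N ω)) μ :=
    (hX.integrable_mul hN).const_mul _
  calc ∫ ω, (b * X ω + N ω) ^ 2 ∂μ
      = ∫ ω, (b ^ 2 * X ω ^ 2 + N ω ^ 2) + 2 * b * (X ω * N ω) ∂μ := by
        congr 1; funext ω; ring
    _ = b ^ 2 * ∫ ω, X ω ^ 2 ∂μ + ∫ ω, N ω ^ 2 ∂μ := by
      rw [integral_add hsq_int hcross_int,
        integral_add (hX.integrable_sq.const_mul _) hN.integrable_sq,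
        integral_const_mul, integral_const_mul, hXN, mul_zero, add_zero]

lemma regCoeff_linear_add (hX : MemLp X 2 μ) (hN : MemLp N 2 μ)
    (hXN : ∫ ω, X ω * N ω ∂μ = 0) (b : ℝ) (hX₂ : ∫ ω, X ω ^ 2 ∂μ ≠ 0) :
    regCoeff μ X (fun ω => b * X ω + N ω) = b := by
  rw [regCoeff, integral_mul_linear_add hX hN hXN, mul_div_cancel_right₀ _ hX₂]

lemma regCoeff_linear_add_rev (hX : MemLp X 2 μ) (hN : MemLp N 2 μ)
    (hXN : ∫ ω, X ω * N ω ∂μ = 0) (b : ℝ) :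
    regCoeff μ (fun ω => b * X ω + N ω) X
      = b * (∫ ω, X ω ^ 2 ∂μ) / (b ^ 2 * ∫ ω, X ω ^ 2 ∂μ + ∫ ω, N ω ^ 2 ∂μ) := by
  rw [regCoeff]
  simp_rw [mul_comm (b * X _ + N _)]
  rw [integral_mul_linear_add hX hN hXN, integral_linear_add_sq hX hN hXN]

end LinearMechanism

end ProbabilityTheory

lemma eq_of_mul_div_sq_mul_add_eq {b s v w : ℝ} (hb : b ≠ 0) (hs : s ≠ 0)
    (hv : b ^ 2 * v + s ≠ 0) (hw : b ^ 2 * w + s ≠ 0)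
    (h : b * v / (b ^ 2 * v + s) = b * w / (b ^ 2 * w + s)) : v = w := by
  rw [div_eq_div_iff hv hw] at h
  exact mul_left_cancel₀ (mul_ne_zero hb hs) (by linear_combination h)

theorem chain_regression_X2_on_X1_invariant_X1_on_X2_varies_general
    {Ω : Type*} [MeasurableSpace Ω] (μ₁ μ₂ : Measure Ω)
    (N₁ N₂ N₃ : Ω → ℝ) (b σ₁sq τ₁sq σ₂sq : ℝ)
    (hL : ∀ i, MemLp (![N₁, N₂, N₃] i) 2 μ₁) (hL' : ∀ i, MemLp (![N₁, N₂, N₃] i) 2 μ₂)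
    (hindep₁ : iIndepFun ![N₁, N₂, N₃] μ₁)
    (hindep₂ : iIndepFun ![N₁, N₂, N₃] μ₂)
    (hm : ∀ i, ∫ ω, (![N₁, N₂, N₃] i) ω ∂μ₁ = 0)
    (hm' : ∀ i, ∫ ω, (![N₁, N₂, N₃] i) ω ∂μ₂ = 0)
    (hv₁ : ∫ ω, (N₁ ω) ^ 2 ∂μ₁ = σ₁sq) (hv₁' : ∫ ω, (N₁ ω) ^ 2 ∂μ₂ = τ₁sq)
    (hv₂ : ∫ ω, (N₂ ω) ^ 2 ∂μ₁ = σ₂sq) (hv₂' : ∫ ω, (N₂ ω) ^ 2 ∂μ₂ = σ₂sq)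
    (hσ₁ : 0 < σ₁sq) (hτ₁ : 0 < τ₁sq) (hσ₂ : 0 < σ₂sq)
    (hne : σ₁sq ≠ τ₁sq) (hb : b ≠ 0)
    (X₁ X₂ : Ω → ℝ)
    (hX₁ : X₁ = N₁) (hX₂ : X₂ = fun ω => b * X₁ ω + N₂ ω) :
    (∫ ω, X₁ ω * X₂ ω ∂μ₁) / (∫ ω, (X₁ ω) ^ 2 ∂μ₁)
        = (∫ ω, X₁ ω * X₂ ω ∂μ₂) / (∫ ω, (X₁ ω) ^ 2 ∂μ₂) ∧
    (∫ ω, X₂ ω * X₁ ω ∂μ₁) / (∫ ω, (X₂ ω) ^ 2 ∂μ₁)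
        ≠ (∫ ω, X₂ ω * X₁ ω ∂μ₂) / (∫ ω, (X₂ ω) ^ 2 ∂μ₂) := by
  subst hX₁ hX₂
  have hX₁L : MemLp X₁ 2 μ₁ := hL 0
  have hX₁L' : MemLp X₁ 2 μ₂ := hL' 0
  have hN₂L : MemLp N₂ 2 μ₁ := hL 1
  have hN₂L' : MemLp N₂ 2 μ₂ := hL' 1
  have hunc₁ : ∫ ω, X₁ ω * N₂ ω ∂μ₁ = 0 :=
    (hindep₁.indepFun zero_ne_one).integral_mul_eq_zero hX₁L.1 hN₂L.1 (hm 0)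
  have hunc₂ : ∫ ω, X₁ ω * N₂ ω ∂μ₂ = 0 :=
    (hindep₂.indepFun zero_ne_one).integral_mul_eq_zero hX₁L'.1 hN₂L'.1 (hm' 0)
  change regCoeff μ₁ X₁ _ = regCoeff μ₂ X₁ _ ∧ regCoeff μ₁ _ X₁ ≠ regCoeff μ₂ _ X₁
  constructor
  · rw [regCoeff_linear_add hX₁L hN₂L hunc₁ b (hv₁ ▸ hσ₁.ne'),
      regCoeff_linear_add hX₁L' hN₂L' hunc₂ b (hv₁' ▸ hτ₁.ne')]
  · rw [regCoeff_linear_add_rev hX₁L hN₂L hunc₁, regCoeff_linear_add_rev hX₁L' hN₂L' hunc₂,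
      hv₁, hv₂, hv₁', hv₂']
    exact fun h => hne (eq_of_mul_div_sq_mul_add_eq hb hσ₂.ne' (by positivity) (by positivity) h)

/-- Chain `X1 → X2 → X3`: `X1 = N1`, `X2 = b*X1 + N2`, `X3 = c*X2 + N3` with
jointly independent zero-mean noises. If only `Var(N1)` changes between the two environments
(`σ1² ≠ σ̃1²`, `b ≠ 0`, all variances positive), then the regression coefficient of
`X2` on `X1` (i.e. `Cov(X1,X2)/Var(X1)`) is invariant, while the regression coefficient of
`X1` on `X2` (i.e. `Cov(X2,X1)/Var(X2)`) changes. -/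
theorem chain_regression_X2_on_X1_invariant_X1_on_X2_varies
    {Ω : Type*} [MeasurableSpace Ω] (μ₁ μ₂ : Measure Ω)
    [IsProbabilityMeasure μ₁] [IsProbabilityMeasure μ₂]
    (N₁ N₂ N₃ : Ω → ℝ) (b c σ₁sq τ₁sq σ₂sq σ₃sq : ℝ)
    (hmeas₁ : Measurable N₁) (hmeas₂ : Measurable N₂) (hmeas₃ : Measurable N₃)
    (hL : ∀ i, MemLp (![N₁, N₂, N₃] i) 2 μ₁) (hL' : ∀ i, MemLp (![N₁, N₂, N₃] i) 2 μ₂)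
    (hindep₁ : iIndepFun ![N₁, N₂, N₃] μ₁)
    (hindep₂ : iIndepFun ![N₁, N₂, N₃] μ₂)
    (hm : ∀ i, ∫ ω, (![N₁, N₂, N₃] i) ω ∂μ₁ = 0)
    (hm' : ∀ i, ∫ ω, (![N₁, N₂, N₃] i) ω ∂μ₂ = 0)
    (hv₁ : ∫ ω, (N₁ ω) ^ 2 ∂μ₁ = σ₁sq) (hv₁' : ∫ ω, (N₁ ω) ^ 2 ∂μ₂ = τ₁sq)
    (hv₂ : ∫ ω, (N₂ ω) ^ 2 ∂μ₁ = σ₂sq) (hv₂' : ∫ ω, (N₂ ω) ^ 2 ∂μ₂ = σ₂sq)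
    (hv₃ : ∫ ω, (N₃ ω) ^ 2 ∂μ₁ = σ₃sq) (hv₃' : ∫ ω, (N₃ ω) ^ 2 ∂μ₂ = σ₃sq)
    (hσ₁ : 0 < σ₁sq) (hτ₁ : 0 < τ₁sq) (hσ₂ : 0 < σ₂sq) (hσ₃ : 0 < σ₃sq)
    (hne : σ₁sq ≠ τ₁sq) (hb : b ≠ 0)
    (X₁ X₂ X₃ : Ω → ℝ)
    (hX₁ : X₁ = N₁) (hX₂ : X₂ = fun ω => b * X₁ ω + N₂ ω)
    (hX₃ : X₃ = fun ω => c * X₂ ω + N₃ ω) :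
    (∫ ω, X₁ ω * X₂ ω ∂μ₁) / (∫ ω, (X₁ ω) ^ 2 ∂μ₁)
        = (∫ ω, X₁ ω * X₂ ω ∂μ₂) / (∫ ω, (X₁ ω) ^ 2 ∂μ₂) ∧
    (∫ ω, X₂ ω * X₁ ω ∂μ₁) / (∫ ω, (X₂ ω) ^ 2 ∂μ₁)
        ≠ (∫ ω, X₂ ω * X₁ ω ∂μ₂) / (∫ ω, (X₂ ω) ^ 2 ∂μ₂) :=
  chain_regression_X2_on_X1_invariant_X1_on_X2_varies_general μ₁ μ₂ N₁ N₂ N₃ b σ₁sq τ₁sq σ₂sq hL hL'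
    hindep₁ hindep₂ hm hm' hv₁ hv₁' hv₂ hv₂' hσ₁ hτ₁ hσ₂ hne hb X₁ X₂ hX₁ hX₂
end

section
/- Let X = Σ_{k∈K} a_k N_k and Y = Σ_{k∈K} b_k N_k + Σ_{k∈K'} c_k N_k with K, K' disjoint and noises independent zero-mean. If the variance of exactly one noise N_j with j ∈ K changes across two environments while all other variances are fixed, and a_j ≠ 0, and the vectors (a_k)_{k∈K} and (b_k)_{k∈K} are such that b_j·(Σ_{k∈K, k≠j} a_k² v_k) ≠ a_j·(Σ_{k∈K, k≠j} a_k b_k v_k), then β_X(Y) differs between the two environments. -/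
/-!
Expanding the products and using independence, `Cov(X, Y) = Σ_{k∈K} a_k b_k v_k` and
`Var X = Σ_{k∈K} a_k² v_k`, the noises of `K'` being orthogonal to `X`. Since only `v_j` moves,
`β_X(Y)` is the linear fractional function `v ↦ (a_j b_j v + T) / (a_j² v + S)` of `v = v_j`,
with `S`, `T` the sums over `K \ {j}`. Such a function is injective as soon as its
determinant `a_j b_j S - T a_j² = a_j (b_j S - a_j T)` is nonzero, which is the genericity
condition.
-/

open MeasureTheory ProbabilityTheory Finset

section Orthogonality

variable {Ω ι : Type*} [MeasurableSpace Ω] {μ : Measure Ω} {N : ι → Ω → ℝ}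

lemma integrable_mul_of_iIndepFun [IsFiniteMeasure μ] (hL : ∀ k, MemLp (N k) 2 μ)
    (hindep : iIndepFun N μ) (k l : ι) : Integrable (fun ω => N k ω * N l ω) μ := by
  rcases eq_or_ne k l with rfl | hkl
  · simpa only [pow_two] using (hL k).integrable_sq
  · exact (hindep.indepFun hkl).integrable_mul ((hL k).integrable one_le_two)
      ((hL l).integrable one_le_two)

lemma integral_mul_of_iIndepFun [DecidableEq ι] (hL : ∀ k, MemLp (N k) 2 μ)
    (hindep : iIndepFun N μ) (hmean : ∀ k, ∫ ω, N k ω ∂μ = 0) (k l : ι) :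
    ∫ ω, N k ω * N l ω ∂μ = if k = l then ∫ ω, N k ω ^ 2 ∂μ else 0 := by
  split_ifs with hkl
  · simp only [hkl, pow_two]
  · have h := (hindep.indepFun hkl).integral_mul_eq_mul_integral (hL k).1 (hL l).1
    rwa [hmean k, zero_mul] at h

theorem integral_sum_mul_sum_of_iIndepFun [IsFiniteMeasure μ] [DecidableEq ι]
    (hL : ∀ k, MemLp (N k) 2 μ) (hindep : iIndepFun N μ) (hmean : ∀ k, ∫ ω, N k ω ∂μ = 0)
    (s t : Finset ι) (a d : ι → ℝ) :
    ∫ ω, (∑ k ∈ s, a k * N k ω) * (∑ l ∈ t, d l * N l ω) ∂μ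
      = ∑ k ∈ s ∩ t, a k * d k * ∫ ω, N k ω ^ 2 ∂μ := by
  have hexpand : ∀ ω, (∑ k ∈ s, a k * N k ω) * (∑ l ∈ t, d l * N l ω)
      = ∑ k ∈ s, ∑ l ∈ t, a k * d l * (N k ω * N l ω) := fun ω => by
    rw [sum_mul_sum]
    exact sum_congr rfl fun k _ => sum_congr rfl fun l _ => by ring
  have hint := integrable_mul_of_iIndepFun hL hindep
  simp_rw [hexpand]
  rw [integral_finsetSum _ fun k _ => integrable_finsetSum _ fun l _ => (hint k l).const_mul _]
  simp_rw [integral_finsetSum _ fun l _ => (hint _ l).const_mul _, integral_const_mul,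
    integral_mul_of_iIndepFun hL hindep hmean, mul_ite, mul_zero, sum_ite_eq, sum_ite_mem]

theorem integral_sq_sum_of_iIndepFun [IsFiniteMeasure μ] [DecidableEq ι]
    (hL : ∀ k, MemLp (N k) 2 μ) (hindep : iIndepFun N μ) (hmean : ∀ k, ∫ ω, N k ω ∂μ = 0)
    (s : Finset ι) (a : ι → ℝ) :
    ∫ ω, (∑ k ∈ s, a k * N k ω) ^ 2 ∂μ = ∑ k ∈ s, a k ^ 2 * ∫ ω, N k ω ^ 2 ∂μ := by
  simp_rw [pow_two (∑ k ∈ s, _), integral_sum_mul_sum_of_iIndepFun hL hindep hmean,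
    inter_self, ← pow_two]

theorem integral_sum_mul_sum_add_sum_of_iIndepFun [IsFiniteMeasure μ] [DecidableEq ι]
    (hL : ∀ k, MemLp (N k) 2 μ) (hindep : iIndepFun N μ) (hmean : ∀ k, ∫ ω, N k ω ∂μ = 0)
    {s t : Finset ι} (hst : Disjoint s t) (a b c : ι → ℝ) :
    ∫ ω, (∑ k ∈ s, a k * N k ω) * ((∑ k ∈ s, b k * N k ω) + ∑ k ∈ t, c k * N k ω) ∂μ
      = ∑ k ∈ s, a k * b k * ∫ ω, N k ω ^ 2 ∂μ := by
  have hsum : ∀ ω, (∑ k ∈ s, b k * N k ω) + ∑ k ∈ t, c k * N k ω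
      = ∑ k ∈ s ∪ t, s.piecewise b c k * N k ω := fun ω => by
    rw [sum_union hst]
    congr 1 <;> refine sum_congr rfl fun k hk => ?_
    · rw [piecewise_eq_of_mem _ _ _ hk]
    · rw [piecewise_eq_of_notMem _ _ _ (disjoint_right.mp hst hk)]
  simp_rw [hsum, integral_sum_mul_sum_of_iIndepFun hL hindep hmean,
    inter_eq_left.mpr subset_union_left]
  exact sum_congr rfl fun k hk => by rw [piecewise_eq_of_mem _ _ _ hk]

end Orthogonality

lemma sum_eq_add_sum_erase_of_eq_of_ne {ι M : Type*} [AddCommMonoid M] [DecidableEq ι]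
    {s : Finset ι} {j : ι} (hj : j ∈ s) {f g : ι → M} (hfg : ∀ k, k ≠ j → f k = g k) :
    ∑ k ∈ s, f k = f j + ∑ k ∈ s.erase j, g k := by
  rw [← add_sum_erase s f hj, sum_congr rfl fun k hk => hfg k (ne_of_mem_erase hk)]

lemma linear_fractional_ne {p q r s x y : ℝ} (hx : r * x + s ≠ 0) (hy : r * y + s ≠ 0)
    (hxy : x ≠ y) (hdet : p * s ≠ q * r) :
    (p * x + q) / (r * x + s) ≠ (p * y + q) / (r * y + s) := by
  rw [Ne, div_eq_div_iff hx hy]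
  intro h
  have : (x - y) * (p * s - q * r) = 0 := by linear_combination h
  rcases mul_eq_zero.mp this with h | h
  · exact hxy (sub_eq_zero.mp h)
  · exact hdet (sub_eq_zero.mp h)

theorem regression_varies_when_cause_noise_changes_general
    {Ω : Type*} [MeasurableSpace Ω] (μ₁ μ₂ : Measure Ω)
    [IsProbabilityMeasure μ₁] [IsProbabilityMeasure μ₂]
    (m : ℕ) (K K' : Finset (Fin m)) (hdisj : Disjoint K K')
    (N : Fin m → Ω → ℝ) (a b c : Fin m → ℝ) (v₁ v₂ : Fin m → ℝ)
    (j : Fin m) (hj : j ∈ K)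
    (hL₁ : ∀ k, MemLp (N k) 2 μ₁) (hL₂ : ∀ k, MemLp (N k) 2 μ₂)
    (hindep₁ : iIndepFun N μ₁)
    (hindep₂ : iIndepFun N μ₂)
    (hmean₁ : ∀ k, ∫ ω, N k ω ∂μ₁ = 0) (hmean₂ : ∀ k, ∫ ω, N k ω ∂μ₂ = 0)
    (hvar₁ : ∀ k, ∫ ω, (N k ω) ^ 2 ∂μ₁ = v₁ k) (hvar₂ : ∀ k, ∫ ω, (N k ω) ^ 2 ∂μ₂ = v₂ k)
    (hpos₁ : ∀ k, 0 < v₁ k) (hpos₂ : ∀ k, 0 < v₂ k)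
    (hfixed : ∀ k, k ≠ j → v₁ k = v₂ k) (hchange : v₁ j ≠ v₂ j)
    (haj : a j ≠ 0)
    (hgen : b j * (∑ k ∈ K.erase j, (a k) ^ 2 * v₁ k)
              ≠ a j * (∑ k ∈ K.erase j, a k * b k * v₁ k))
    (X Y : Ω → ℝ)
    (hX : X = fun ω => ∑ k ∈ K, a k * N k ω)
    (hY : Y = fun ω => (∑ k ∈ K, b k * N k ω) + ∑ k ∈ K', c k * N k ω) :
    (∫ ω, X ω * Y ω ∂μ₁) / (∫ ω, (X ω) ^ 2 ∂μ₁)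
      ≠ (∫ ω, X ω * Y ω ∂μ₂) / (∫ ω, (X ω) ^ 2 ∂μ₂) := by
  subst hX hY
  simp only [integral_sum_mul_sum_add_sum_of_iIndepFun hL₁ hindep₁ hmean₁ hdisj,
    integral_sum_mul_sum_add_sum_of_iIndepFun hL₂ hindep₂ hmean₂ hdisj,
    integral_sq_sum_of_iIndepFun hL₁ hindep₁ hmean₁,
    integral_sq_sum_of_iIndepFun hL₂ hindep₂ hmean₂, hvar₁, hvar₂]
  set S := ∑ k ∈ K.erase j, a k ^ 2 * v₁ k
  set T := ∑ k ∈ K.erase j, a k * b k * v₁ k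
  have hsplit : ∀ v : Fin m → ℝ, (∀ k, k ≠ j → v₁ k = v k) →
      ∑ k ∈ K, a k * b k * v k = a j * b j * v j + T ∧
        ∑ k ∈ K, a k ^ 2 * v k = a j ^ 2 * v j + S := fun v hv =>
    ⟨sum_eq_add_sum_erase_of_eq_of_ne hj fun k hk => by rw [hv k hk],
      sum_eq_add_sum_erase_of_eq_of_ne hj fun k hk => by rw [hv k hk]⟩
  have hS : 0 ≤ S := sum_nonneg fun k _ => mul_nonneg (sq_nonneg _) (hpos₁ k).le
  have hdenom : ∀ v : ℝ, 0 < v → a j ^ 2 * v + S ≠ 0 := fun v hv =>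
    (add_pos_of_pos_of_nonneg (mul_pos (sq_pos_of_ne_zero haj) hv) hS).ne'
  rw [(hsplit v₁ fun _ _ => rfl).1, (hsplit v₁ fun _ _ => rfl).2, (hsplit v₂ hfixed).1,
    (hsplit v₂ hfixed).2]
  refine linear_fractional_ne (hdenom _ (hpos₁ j)) (hdenom _ (hpos₂ j)) hchange ?_
  intro hdet
  exact hgen (mul_left_cancel₀ haj (by linear_combination hdet))

/-- Let `X = Σ_{k∈K} a_k N_k` and `Y = Σ_{k∈K} b_k N_k + Σ_{k∈K'} c_k N_k`
with `K, K'` disjoint and jointly independent zero-mean noises. If across two environments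
the variance of exactly one noise `N_j` with `j ∈ K` changes (all other variances fixed,
all positive), `a_j ≠ 0`, and the genericity condition
`b_j · Σ_{k∈K, k≠j} a_k² v_k ≠ a_j · Σ_{k∈K, k≠j} a_k b_k v_k` holds, then
`β_X(Y) = Cov(X,Y)/Var(X)` differs between the two environments. -/
theorem regression_varies_when_cause_noise_changes
    {Ω : Type*} [MeasurableSpace Ω] (μ₁ μ₂ : Measure Ω)
    [IsProbabilityMeasure μ₁] [IsProbabilityMeasure μ₂]
    (m : ℕ) (K K' : Finset (Fin m)) (hdisj : Disjoint K K')
    (N : Fin m → Ω → ℝ) (a b c : Fin m → ℝ) (v₁ v₂ : Fin m → ℝ)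
    (j : Fin m) (hj : j ∈ K)
    (hmeas : ∀ k, Measurable (N k))
    (hL₁ : ∀ k, MemLp (N k) 2 μ₁) (hL₂ : ∀ k, MemLp (N k) 2 μ₂)
    (hindep₁ : iIndepFun N μ₁)
    (hindep₂ : iIndepFun N μ₂)
    (hmean₁ : ∀ k, ∫ ω, N k ω ∂μ₁ = 0) (hmean₂ : ∀ k, ∫ ω, N k ω ∂μ₂ = 0)
    (hvar₁ : ∀ k, ∫ ω, (N k ω) ^ 2 ∂μ₁ = v₁ k) (hvar₂ : ∀ k, ∫ ω, (N k ω) ^ 2 ∂μ₂ = v₂ k)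
    (hpos₁ : ∀ k, 0 < v₁ k) (hpos₂ : ∀ k, 0 < v₂ k)
    (hfixed : ∀ k, k ≠ j → v₁ k = v₂ k) (hchange : v₁ j ≠ v₂ j)
    (haj : a j ≠ 0)
    (hgen : b j * (∑ k ∈ K.erase j, (a k) ^ 2 * v₁ k)
              ≠ a j * (∑ k ∈ K.erase j, a k * b k * v₁ k))
    (X Y : Ω → ℝ)
    (hX : X = fun ω => ∑ k ∈ K, a k * N k ω)
    (hY : Y = fun ω => (∑ k ∈ K, b k * N k ω) + ∑ k ∈ K', c k * N k ω) :
    (∫ ω, X ω * Y ω ∂μ₁) / (∫ ω, (X ω) ^ 2 ∂μ₁)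
      ≠ (∫ ω, X ω * Y ω ∂μ₂) / (∫ ω, (X ω) ^ 2 ∂μ₂) :=
  regression_varies_when_cause_noise_changes_general μ₁ μ₂ m K K' hdisj N a b c v₁ v₂ j hj hL₁ hL₂
    hindep₁ hindep₂ hmean₁ hmean₂ hvar₁ hvar₂ hpos₁ hpos₂ hfixed hchange haj hgen X Y hX hY
end
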